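/- arXiv:1510.00426 — 4 statements merged into one kernel-verified Lean document; each statement's English description precedes it below -/
import Mathlib

section
/- Let f : X → Y be a morphism in a triangulated category that admits a pseudo-inverse, i.e., a morphism g : Y → X with f ∘ g ∘ f = f. Then the cone of f is a retract (direct summand) of Y ⊕ ΣX. -/
/-!
If `g` is a pseudo-inverse of `f`, then `𝟙 - g ≫ f` kills `f`, so it factors as `u ≫ ψ` through
the cone; this `ψ` is a pseudo-inverse of `u`. Rotating and repeating, `𝟙 - ψ ≫ u` factors as
`v ≫ w`, so `𝟙 = ψ ≫ u + v ≫ w`, which is the retraction of the cone onto `Y ⊞ X⟦1⟧`.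
-/

open CategoryTheory CategoryTheory.Limits CategoryTheory.Pretriangulated

universe v u

namespace CategoryTheory.Pretriangulated

variable {C : Type u} [Category.{v} C] [Preadditive C] [HasZeroObject C] [HasShift C ℤ]
  [∀ n : ℤ, (shiftFunctor C n).Additive] [Pretriangulated C]
  {X Y Z : C} {f : X ⟶ Y} {u : Y ⟶ Z} {v : Z ⟶ X⟦(1 : ℤ)⟧} {g : Y ⟶ X}

lemma exists_mor₂_comp_eq_id_sub_of_pseudo_inverse (hT : Triangle.mk f u v ∈ distTriang C)
    (hg : f ≫ g ≫ f = f) : ∃ ψ : Z ⟶ Y, u ≫ ψ = 𝟙 Y - g ≫ f := by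
  have hkill : f ≫ (𝟙 Y - g ≫ f) = 0 := by
    rw [Preadditive.comp_sub, Category.comp_id, hg, sub_self]
  obtain ⟨ψ, hψ⟩ := Triangle.yoneda_exact₂ _ hT _ hkill
  exact ⟨ψ, hψ.symm⟩

lemma exists_pseudo_inverse_mor₂_of_pseudo_inverse (hT : Triangle.mk f u v ∈ distTriang C)
    (hg : f ≫ g ≫ f = f) : ∃ ψ : Z ⟶ Y, u ≫ ψ ≫ u = u := by
  obtain ⟨ψ, hψ⟩ := exists_mor₂_comp_eq_id_sub_of_pseudo_inverse hT hg
  have hfu : f ≫ u = 0 := comp_distTriang_mor_zero₁₂ _ hT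
  refine ⟨ψ, ?_⟩
  rw [← Category.assoc, hψ, Preadditive.sub_comp, Category.assoc, hfu,
    Category.id_comp, Limits.comp_zero, sub_zero]

end CategoryTheory.Pretriangulated

/-- If a morphism `f : X ⟶ Y` in a (pre)triangulated category admits a
pseudo-inverse `g` (i.e. `f ≫ g ≫ f = f`), then any cone of `f` is a retract of
`Y ⊞ X⟦1⟧`. -/
theorem cone_retract_of_pseudo_inverse
    {C : Type u} [Category.{v} C] [Preadditive C] [HasZeroObject C]
    [HasShift C ℤ] [∀ n : ℤ, (CategoryTheory.shiftFunctor C n).Additive]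
    [Pretriangulated C] [HasBinaryBiproducts C]
    {X Y : C} (f : X ⟶ Y) (g : Y ⟶ X) (hpseudo : f ≫ g ≫ f = f)
    {Z : C} (u : Y ⟶ Z) (v : Z ⟶ X⟦(1 : ℤ)⟧)
    (hdist : Triangle.mk f u v ∈ distTriang C) :
    ∃ (i : Z ⟶ Y ⊞ X⟦(1 : ℤ)⟧) (r : Y ⊞ X⟦(1 : ℤ)⟧ ⟶ Z), i ≫ r = 𝟙 Z := by
  obtain ⟨ψ, hψ⟩ := exists_pseudo_inverse_mor₂_of_pseudo_inverse hdist hpseudo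
  have hrot : Triangle.mk u v (-f⟦(1 : ℤ)⟧') ∈ distTriang C := rot_of_distTriang _ hdist
  obtain ⟨w, hw⟩ := exists_mor₂_comp_eq_id_sub_of_pseudo_inverse hrot hψ
  refine ⟨biprod.lift ψ v, biprod.desc u w, ?_⟩
  rw [biprod.lift_desc]
  exact add_eq_of_eq_sub' hw
end

section
/- Let R be a two-sided noetherian ring such that the category Mod R of right R-modules is Gorenstein (every object has finite projective dimension iff it has finite injective dimension, the finitary projective and injective dimensions of Mod R are finite, and Mod R has a generator of finite projective dimension). Then R is Iwanaga-Gorenstein, i.e., R has finite self-injective dimension as a left module and as a right module. -/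
open CategoryTheory CategoryTheory.Limits

universe v u

namespace Stmt1

variable {A : Type u} [Category.{v} A] [Abelian A]

/-- `PdimLE n M` : `M` has projective dimension at most `n`. -/
def PdimLE : ℕ → A → Prop
  | 0, M => Projective M
  | n + 1, M => Projective M ∨
      ∃ (K P : A) (i : K ⟶ P) (p : P ⟶ M) (w : i ≫ p = 0),
        Projective P ∧ (ShortComplex.mk i p w).ShortExact ∧ PdimLE n K

/-- `IdimLE n M` : `M` has injective dimension at most `n`. -/
def IdimLE : ℕ → A → Prop
  | 0, M => Injective M
  | n + 1, M => Injective M ∨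
      ∃ (I K : A) (i : M ⟶ I) (p : I ⟶ K) (w : i ≫ p = 0),
        Injective I ∧ (ShortComplex.mk i p w).ShortExact ∧ IdimLE n K

/-- `M` has finite projective dimension. -/
def FinPdim (M : A) : Prop := ∃ n, PdimLE n M

/-- `M` has finite injective dimension. -/
def FinIdim (M : A) : Prop := ∃ n, IdimLE n M

/-- An abelian category is *Gorenstein* if finiteness of projective dimension and of
injective dimension agree objectwise, the finitary projective and injective dimensions
are finite, and there is a generator of finite projective dimension. -/
def IsGorenstein (A : Type u) [Category.{v} A] [Abelian A] : Prop :=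
  (∀ M : A, FinPdim M ↔ FinIdim M) ∧
  (∃ n : ℕ, (∀ M : A, FinPdim M → PdimLE n M) ∧ (∀ M : A, FinIdim M → IdimLE n M)) ∧
  (∃ G : A, IsSeparator G ∧ FinPdim G)

end Stmt1

open Stmt1

/-!
Let `J` be an injective cogenerator of right `R`-modules. By the Gorenstein hypothesis `J` has
projective dimension `≤ n`, so `Tor_i(J, R ⧸ I) = 0` for `i > n` and every left ideal `I`.
Resolving `R ⧸ I` by finite free modules `F_•` (possible as `R` is left noetherian), this Tor is
the homology of `Hom(F_•^*, J)`, and as `J` is a cogenerator its vanishing forces exactness of the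
dual complex `F_•^*`, i.e. `Ext^i(R ⧸ I, R) = 0` for `i > n`. By dimension shifting and Baer's
criterion, `R` then has injective dimension `≤ n`. On the other side `Rᵐᵒᵖ` is projective, hence
of finite injective dimension by the Gorenstein hypothesis.
-/

namespace IwanagaGorenstein

open LinearMap

section HomExactAt

variable {S : Type u} [Ring S]

/-- `Hom_S(-, M)` turns `X → Y → Z` into a sequence exact at `Hom_S(Y, M)`. On a free resolution
of `R ⧸ I` this is the vanishing of `Ext (R ⧸ I) M`; on its dual, that of `Tor M (R ⧸ I)`. -/
def HomExactAt (M : Type*) [AddCommGroup M] [Module S M] {X Y Z : Type*}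
    [AddCommGroup X] [Module S X] [AddCommGroup Y] [Module S Y] [AddCommGroup Z] [Module S Z]
    (f : X →ₗ[S] Y) (g : Y →ₗ[S] Z) : Prop :=
  ∀ φ : Y →ₗ[S] M, φ ∘ₗ f = 0 → ∃ ψ : Z →ₗ[S] M, ψ ∘ₗ g = φ

variable {M X Y Z : Type*} [AddCommGroup M] [Module S M]
  [AddCommGroup X] [Module S X] [AddCommGroup Y] [Module S Y] [AddCommGroup Z] [Module S Z]
  {f : X →ₗ[S] Y} {g : Y →ₗ[S] Z}

lemma exists_comp_eq_of_range_le {A B : Type*} [AddCommGroup A] [Module S A]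
    [AddCommGroup B] [Module S B] {a : A →ₗ[S] B} (ha : Function.Injective a) {h : X →ₗ[S] B}
    (hh : range h ≤ range a) : ∃ h' : X →ₗ[S] A, a ∘ₗ h' = h :=
  ⟨(LinearEquiv.ofInjective a ha).symm ∘ₗ h.codRestrict (range a) fun x => hh ⟨x, rfl⟩,
    by ext x; simp⟩

namespace HomExactAt

lemma of_retract {M' : Type*} [AddCommGroup M'] [Module S M'] (s : M' →ₗ[S] M) (p : M →ₗ[S] M')
    (hps : p ∘ₗ s = LinearMap.id) (h : HomExactAt M f g) : HomExactAt M' f g := by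
  intro φ hφ
  obtain ⟨ψ, hψ⟩ := h (s ∘ₗ φ) (by rw [LinearMap.comp_assoc, hφ, LinearMap.comp_zero])
  refine ⟨p ∘ₗ ψ, ?_⟩
  rw [LinearMap.comp_assoc, hψ, ← LinearMap.comp_assoc, hps, LinearMap.id_comp]

lemma finsupp [Module.Finite S Y] (ι : Type*) (h : HomExactAt M f g) :
    HomExactAt (ι →₀ M) f g := by
  classical
  intro x hx
  choose y hy using fun i =>
    h (Finsupp.lapply i ∘ₗ x) (by rw [LinearMap.comp_assoc, hx, LinearMap.comp_zero])
  obtain ⟨s, hs⟩ := Module.Finite.fg_top (R := S) (M := Y)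
  set T := s.biUnion fun v => (x v).support
  have hT : range x ≤ Finsupp.supported M S (T : Set ι) := by
    rw [range_eq_map, ← hs, Submodule.map_span_le]
    intro v hv
    rw [Finsupp.mem_supported]
    exact fun i hi => Finset.mem_biUnion.2 ⟨v, hv, hi⟩
  refine ⟨∑ i ∈ T, Finsupp.lsingle i ∘ₗ y i, LinearMap.ext fun v => ?_⟩
  have hv := (Finsupp.mem_supported S (x v)).1 (hT ⟨v, rfl⟩)
  have hyv : ∀ i, y i (g v) = x v i := fun i => LinearMap.congr_fun (hy i) v
  simp only [LinearMap.sum_apply, LinearMap.comp_apply, Finsupp.lsingle_apply, hyv]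
  rw [← Finsupp.sum_of_support_subset _ (Finset.coe_subset.mp hv) _
    (fun _ _ => Finsupp.single_zero _), Finsupp.sum_single]

lemma of_projective (P : Type*) [AddCommGroup P] [Module S P] [Module.Projective S P]
    [Module.Finite S Y] (h : HomExactAt S f g) : HomExactAt P f g := by
  obtain ⟨s, hs⟩ := Module.projective_def.mp ‹Module.Projective S P›
  exact (h.finsupp P).of_retract s (Finsupp.linearCombination S id) (LinearMap.ext hs)

/-- A piece of the long exact sequence of `Hom(X_•, -)` applied to `0 → K → P → A → 0`: the
homology at `Hom(X₂, A)` lies between that at `Hom(X₂, P)` and that at `Hom(X₁, K)`. -/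
lemma of_shortExact {K P A X₀ X₁ X₂ X₃ : Type*} [AddCommGroup K] [Module S K]
    [AddCommGroup P] [Module S P] [AddCommGroup A] [Module S A] [AddCommGroup X₀] [Module S X₀]
    [AddCommGroup X₁] [Module S X₁] [AddCommGroup X₂] [Module S X₂] [Module.Projective S X₂]
    [AddCommGroup X₃] [Module S X₃] {a : K →ₗ[S] P} {b : P →ₗ[S] A}
    (ha : Function.Injective a) (hab : Function.Exact a b) (hb : Function.Surjective b)
    {u₀ : X₀ →ₗ[S] X₁} {u₁ : X₁ →ₗ[S] X₂} {u₂ : X₂ →ₗ[S] X₃} (hu : u₁ ∘ₗ u₀ = 0)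
    (hK : HomExactAt K u₀ u₁) (hP : HomExactAt P u₁ u₂) : HomExactAt A u₁ u₂ := by
  intro x hx
  obtain ⟨x', rfl⟩ := Module.projective_lifting_property b x hb
  obtain ⟨z, hz⟩ := exists_comp_eq_of_range_le ha (h := x' ∘ₗ u₁) <| by
    rintro _ ⟨y, rfl⟩
    rw [← hab.linearMap_ker_eq]
    exact LinearMap.congr_fun hx y
  have hzu : z ∘ₗ u₀ = 0 := (LinearMap.cancel_left ha).mp <| by
    rw [← LinearMap.comp_assoc, hz, LinearMap.comp_assoc, hu, LinearMap.comp_zero,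
      LinearMap.comp_zero]
  obtain ⟨w, hw⟩ := hK z hzu
  obtain ⟨v, hv⟩ := hP (x' - a ∘ₗ w) <| by
    rw [LinearMap.sub_comp, LinearMap.comp_assoc, hw, hz, sub_self]
  refine ⟨b ∘ₗ v, ?_⟩
  rw [LinearMap.comp_assoc, hv, LinearMap.comp_sub, ← LinearMap.comp_assoc,
    hab.linearMap_comp_eq_zero, LinearMap.zero_comp, sub_zero]

end HomExactAt

end HomExactAt

section InjectiveModule

variable {S : Type u} [Ring S] [Small.{v} S] {M Y Z : Type v} [AddCommGroup M] [Module S M]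
  [Module.Injective S M] [AddCommGroup Y] [Module S Y] [AddCommGroup Z] [Module S Z]

lemma exists_comp_eq_of_ker_le (g : Y →ₗ[S] Z) {φ : Y →ₗ[S] M} (h : ker g ≤ ker φ) :
    ∃ ψ : Z →ₗ[S] M, ψ ∘ₗ g = φ := by
  obtain ⟨ψ, hψ⟩ := Module.Injective.extension_property S M _ _ (range g).subtype
    (range g).injective_subtype ((ker g).liftQ φ h ∘ₗ g.quotKerEquivRange.symm.toLinearMap)
  refine ⟨ψ, LinearMap.ext fun y => ?_⟩
  have := LinearMap.congr_fun hψ ⟨g y, mem_range_self g y⟩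
  simpa [quotKerEquivRange_symm_apply_image] using this

lemma HomExactAt.of_injective {X : Type*} [AddCommGroup X] [Module S X] {f : X →ₗ[S] Y}
    {g : Y →ₗ[S] Z} (hfg : Function.Exact f g) : HomExactAt M f g := by
  intro φ hφ
  refine exists_comp_eq_of_ker_le g ?_
  rw [hfg.linearMap_ker_eq]
  rintro _ ⟨x, rfl⟩
  exact LinearMap.congr_fun hφ x

end InjectiveModule

section Coseparator

variable {S : Type u} [Ring S] {J : ModuleCat.{u} S}

lemma _root_.CategoryTheory.IsCoseparator.exists_linearMap_apply_ne_zero (hJ : IsCoseparator J)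
    {N : Type u} [AddCommGroup N] [Module S N] {m : N} (hm : m ≠ 0) :
    ∃ c : N →ₗ[S] J, c m ≠ 0 := by
  by_contra! hc
  apply hm
  have := (Preadditive.isCoseparator_iff J).mp hJ
    (ModuleCat.ofHom (LinearMap.toSpanSingleton S N m)) fun c => by ext; simp [hc c.hom]
  simpa using LinearMap.congr_fun (ModuleCat.hom_ext_iff.mp this) 1

lemma HomExactAt.ker_le_range (hJ : IsCoseparator J) {X Y Z : Type u}
    [AddCommGroup X] [Module S X] [AddCommGroup Y] [Module S Y] [AddCommGroup Z] [Module S Z]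
    {f : X →ₗ[S] Y} {g : Y →ₗ[S] Z} (h : HomExactAt J f g) : ker g ≤ range f := by
  intro y hy
  by_contra hyf
  obtain ⟨c, hc⟩ := hJ.exists_linearMap_apply_ne_zero
    (m := (range f).mkQ y) (by rwa [ne_eq, Submodule.mkQ_apply, Submodule.Quotient.mk_eq_zero])
  obtain ⟨ψ, hψ⟩ := h (c ∘ₗ (range f).mkQ) <| by
    ext x
    simp only [LinearMap.comp_apply, Submodule.mkQ_apply, LinearMap.zero_apply]
    rw [(Submodule.Quotient.mk_eq_zero _).mpr (mem_range_self f x), map_zero]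
  apply hc
  rw [← LinearMap.comp_apply, ← hψ, LinearMap.comp_apply, LinearMap.mem_ker.mp hy, map_zero]

end Coseparator

section Tor

variable {S : Type u} [Ring S] {X : ℕ → Type v} [∀ m, AddCommGroup (X m)] [∀ m, Module S (X m)]
  [∀ m, Module.Projective S (X m)] [∀ m, Module.Finite S (X m)] {u : ∀ m, X m →ₗ[S] X (m + 1)}

theorem homExactAt_of_pdimLE (hu : ∀ m, u (m + 1) ∘ₗ u m = 0)
    (hS : ∀ m, HomExactAt S (u m) (u (m + 1))) :
    ∀ (k : ℕ) (M : ModuleCat.{u} S), PdimLE k M → ∀ j, k ≤ j → HomExactAt M (u j) (u (j + 1))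
  | 0, M, hM, j, _ | _ + 1, M, Or.inl hM, j, _ =>
    have := (IsProjective.iff_projective M).mpr hM
    (hS j).of_projective M
  | k + 1, _, Or.inr ⟨K, P, _, _, _, hP, hSE, hK⟩, j + 1, hj =>
    have := (IsProjective.iff_projective P).mpr hP
    HomExactAt.of_shortExact hSE.moduleCat_injective_f
      ((ShortComplex.ShortExact.moduleCat_exact_iff_function_exact _).mp hSE.exact)
      hSE.moduleCat_surjective_g (hu j)
      (homExactAt_of_pdimLE hu hS k K hK j (by omega)) ((hS (j + 1)).of_projective P)

end Tor

variable {R : Type u} [Ring R]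

section Duality

lemma homExactAt_iff_ker_le_range {X Y Z : Type*} [AddCommGroup X] [Module R X]
    [AddCommGroup Y] [Module R Y] [AddCommGroup Z] [Module R Z] {f : X →ₗ[R] Y}
    {g : Y →ₗ[R] Z} :
    HomExactAt R f g ↔ ker (lcomp Rᵐᵒᵖ R f) ≤ range (lcomp Rᵐᵒᵖ R g) :=
  Iff.rfl

lemma homExactAt_lcomp {X Y Z : Type*} [AddCommGroup X] [Module R X]
    [AddCommGroup Y] [Module R Y] [AddCommGroup Z] [Module R Z] {f : X →ₗ[R] Y}
    {g : Y →ₗ[R] Z} (hfg : Function.Exact f g)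
    (hY : Function.Surjective (applyₗ' Rᵐᵒᵖ : Y →+ (Y →ₗ[R] R) →ₗ[Rᵐᵒᵖ] R))
    (hZ : Function.Injective (applyₗ' Rᵐᵒᵖ : Z →+ (Z →ₗ[R] R) →ₗ[Rᵐᵒᵖ] R)) :
    HomExactAt R (lcomp Rᵐᵒᵖ R g) (lcomp Rᵐᵒᵖ R f) := by
  intro Φ hΦ
  obtain ⟨y, rfl⟩ := hY Φ
  have hy : g y = 0 := (injective_iff_map_eq_zero _).mp hZ _ <| by
    ext ψ
    exact LinearMap.congr_fun hΦ ψ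
  obtain ⟨x, rfl⟩ := (hfg y).mp hy
  exact ⟨applyₗ' Rᵐᵒᵖ x, rfl⟩

variable (ι : Type*) [Fintype ι] [DecidableEq ι]

def dualPiEquiv : ((ι → R) →ₗ[R] R) ≃ₗ[Rᵐᵒᵖ] (ι → Rᵐᵒᵖ) :=
  (LinearEquiv.piRing R R ι Rᵐᵒᵖ).trans
    (LinearEquiv.piCongrRight fun _ => MulOpposite.opLinearEquiv Rᵐᵒᵖ)

instance : Module.Finite Rᵐᵒᵖ ((ι → R) →ₗ[R] R) :=
  Module.Finite.equiv (dualPiEquiv ι).symm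

instance : Module.Projective Rᵐᵒᵖ ((ι → R) →ₗ[R] R) :=
  Module.Projective.of_equiv (dualPiEquiv ι).symm

lemma bijective_applyₗ'_pi :
    Function.Bijective (applyₗ' Rᵐᵒᵖ : (ι → R) →+ ((ι → R) →ₗ[R] R) →ₗ[Rᵐᵒᵖ] R) := by
  refine ⟨(injective_iff_map_eq_zero _).mpr fun x hx =>
    funext fun i => LinearMap.congr_fun hx (proj i), fun Φ => ⟨fun i => Φ (proj i), ?_⟩⟩
  ext ψ
  have hψ : ∀ x, ψ x = ∑ i, x i * ψ (Pi.single i 1) := fun x => by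
    conv_lhs => rw [← (LinearEquiv.piRing R R ι Rᵐᵒᵖ).symm_apply_apply ψ,
      LinearEquiv.piRing_symm_apply]
    rfl
  have hψ' : ψ = ∑ i, MulOpposite.op (ψ (Pi.single i 1)) • proj i :=
    LinearMap.ext fun x => by simp [hψ x]
  calc ψ (fun i => Φ (proj i)) = ∑ i, Φ (proj i) * ψ (Pi.single i 1) := hψ _
    _ = Φ ψ := by
      conv_rhs => rw [hψ']
      simp

end Duality

lemma exists_pi_range_eq {M : Type u} [AddCommGroup M] [Module R M] [IsNoetherian R M]
    (K : Submodule R M) : ∃ (n : ℕ) (f : (Fin n → R) →ₗ[R] M), range f = K := by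
  obtain ⟨n, f, hf⟩ := Module.Finite.exists_fin' R K
  exact ⟨n, K.subtype ∘ₗ f, by rw [range_comp, range_eq_top.mpr hf, Submodule.map_top,
    Submodule.range_subtype]⟩

section Resolution

variable [IsNoetherianRing R]

noncomputable def coverRank {n : ℕ} (K : Submodule R (Fin n → R)) : ℕ :=
  (exists_pi_range_eq K).choose

noncomputable def cover {n : ℕ} (K : Submodule R (Fin n → R)) :
    (Fin (coverRank K) → R) →ₗ[R] (Fin n → R) :=
  (exists_pi_range_eq K).choose_spec.choose

lemma range_cover {n : ℕ} (K : Submodule R (Fin n → R)) : range (cover K) = K :=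
  (exists_pi_range_eq K).choose_spec.choose_spec

/-- The syzygies of `R ⧸ I`, each inside a finite free module; the zeroth one is `I ⊆ R¹`. -/
noncomputable def syzygy (I : Ideal R) : ℕ → Σ n : ℕ, Submodule R (Fin n → R)
  | 0 => ⟨1, Submodule.comap (proj 0 : (Fin 1 → R) →ₗ[R] R) I⟩
  | m + 1 => ⟨coverRank (syzygy I m).2, ker (cover (syzygy I m).2)⟩

variable (I : Ideal R)

/-- The differential `F_{m+1} → F_m` of a free resolution `F_• → R ⧸ I` with `F_0 = R¹`. -/
noncomputable def resolution (m : ℕ) :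
    (Fin (syzygy I (m + 1)).1 → R) →ₗ[R] (Fin (syzygy I m).1 → R) :=
  cover (syzygy I m).2

lemma range_resolution (m : ℕ) : range (resolution I m) = (syzygy I m).2 :=
  range_cover _

lemma exact_resolution (m : ℕ) : Function.Exact (resolution I (m + 1)) (resolution I m) :=
  LinearMap.exact_iff.mpr (range_resolution I (m + 1)).symm

lemma resolution_comp_resolution (m : ℕ) : resolution I m ∘ₗ resolution I (m + 1) = 0 :=
  (exact_resolution I m).linearMap_comp_eq_zero

lemma homExactAt_dual_resolution {k : ℕ} {M : ModuleCat.{u} Rᵐᵒᵖ} (hM : PdimLE k M) {j : ℕ}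
    (hj : k ≤ j) :
    HomExactAt M (lcomp Rᵐᵒᵖ R (resolution I j)) (lcomp Rᵐᵒᵖ R (resolution I (j + 1))) := by
  refine homExactAt_of_pdimLE (X := fun m => (Fin (syzygy I m).1 → R) →ₗ[R] R)
    (u := fun m => lcomp Rᵐᵒᵖ R (resolution I m)) (fun m => ?_) (fun m => ?_) k M hM j hj
  · ext ψ : 1
    simp [lcomp_apply', LinearMap.comp_assoc, resolution_comp_resolution]
  · let e := MulOpposite.opLinearEquiv (M := R) Rᵐᵒᵖ
    exact HomExactAt.of_retract e.symm.toLinearMap e.toLinearMap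
      (LinearMap.ext e.apply_symm_apply) (homExactAt_lcomp (exact_resolution I m)
        (bijective_applyₗ'_pi _).2 (bijective_applyₗ'_pi _).1)

end Resolution

lemma shortExact_injective_ι {C : Type*} [Category C] [Abelian C] [EnoughInjectives C] (X : C) :
    (ShortComplex.mk (Injective.ι X) (cokernel.π _) (cokernel.condition _)).ShortExact :=
  { exact := ShortComplex.exact_of_g_is_cokernel _ (cokernelIsCokernel _) }

section InjectiveDimension

variable [IsNoetherianRing R]

lemma baer_of_homExactAt {M : Type u} [AddCommGroup M] [Module R M]
    (h : ∀ I : Ideal R, HomExactAt M (resolution I 1) (resolution I 0)) : Module.Baer R M := by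
  intro I g
  let p₀ : (Fin 1 → R) →ₗ[R] R := proj 0
  have hd : ∀ v, p₀ (resolution I 0 v) ∈ I := fun v => (range_resolution I 0).le ⟨v, rfl⟩
  obtain ⟨ψ, hψ⟩ := h I (g ∘ₗ (p₀ ∘ₗ resolution I 0).codRestrict I hd) <| by
    refine LinearMap.ext fun v => ?_
    have : resolution I 0 (resolution I 1 v) = 0 :=
      LinearMap.congr_fun (resolution_comp_resolution I 0) v
    rw [LinearMap.comp_apply, LinearMap.comp_apply, LinearMap.zero_apply, ← map_zero g]
    congr 1
    ext
    -- `(syzygy I 0).1` is `1` only after unfolding, hence the `show`s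
    show p₀ (resolution I 0 (resolution I 1 v)) = 0
    simp only [this]
    exact map_zero p₀
  refine ⟨ψ ∘ₗ LinearMap.pi fun _ => LinearMap.id, fun x hx => ?_⟩
  obtain ⟨v, hv⟩ := (range_resolution I 0).ge (show (fun _ => x) ∈ (syzygy I 0).2 from hx)
  calc ψ (fun _ => x) = ψ (resolution I 0 v) := by rw [hv]
    _ = g ((p₀ ∘ₗ resolution I 0).codRestrict I hd v) := LinearMap.congr_fun hψ v
    _ = g ⟨x, hx⟩ := congr_arg g <| Subtype.ext <| by
      show p₀ (resolution I 0 v) = x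
      rw [hv]
      rfl

theorem idimLE_of_homExactAt : ∀ (n : ℕ) (M : ModuleCat.{u} R),
    (∀ (I : Ideal R) (k : ℕ), n ≤ k → HomExactAt M (resolution I (k + 1)) (resolution I k)) →
    IdimLE n M
  | 0, M, h => Module.injective_object_of_injective_module (inj :=
      (baer_of_homExactAt fun I => h I 0 le_rfl).injective) R M
  | n + 1, M, h =>
    have hSE := shortExact_injective_ι M
    have := Module.injective_module_of_injective_object R (Injective.under M : ModuleCat.{u} R)
      (inj := (inferInstance : Injective (Injective.under M)))
    Or.inr ⟨_, _, _, _, _, inferInstance, hSE, idimLE_of_homExactAt n _ fun I k hk =>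
      HomExactAt.of_shortExact hSE.moduleCat_injective_f
        ((ShortComplex.ShortExact.moduleCat_exact_iff_function_exact _).mp hSE.exact)
        hSE.moduleCat_surjective_g (resolution_comp_resolution I (k + 1)) (h I (k + 1) (by omega))
        (HomExactAt.of_injective (exact_resolution I k))⟩

end InjectiveDimension

end IwanagaGorenstein

open IwanagaGorenstein

theorem iwanaga_gorenstein_of_gorenstein_module_category_general
    (R : Type u) [Ring R] [IsNoetherianRing R]
    (hGor : IsGorenstein (ModuleCat.{u} Rᵐᵒᵖ)) :
    (∃ n : ℕ, IdimLE n (ModuleCat.of R R)) ∧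
    (∃ n : ℕ, IdimLE n (ModuleCat.of Rᵐᵒᵖ Rᵐᵒᵖ)) := by
  obtain ⟨hfin, ⟨n, hpd, -⟩, -⟩ := hGor
  obtain ⟨J, hJ, hJcosep⟩ := Abelian.has_injective_coseparator _ (ModuleCat.isSeparator Rᵐᵒᵖ)
  have hJpd : PdimLE n J := hpd J ((hfin J).mpr ⟨0, hJ⟩)
  refine ⟨⟨n, idimLE_of_homExactAt n _ fun I k hk => ?_⟩, (hfin _).mp ⟨0, ?_⟩⟩
  · exact homExactAt_iff_ker_le_range.mpr
      (HomExactAt.ker_le_range hJcosep (homExactAt_dual_resolution I hJpd hk))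
  · exact (IsProjective.iff_projective _).mp inferInstance

/-- If `R` is a two-sided noetherian ring such that the category of right
`R`-modules (that is, left `Rᵐᵒᵖ`-modules) is a Gorenstein category, then `R` is
Iwanaga–Gorenstein: it has finite self-injective dimension both as a left module over
itself and as a right module over itself. -/
theorem iwanaga_gorenstein_of_gorenstein_module_category
    (R : Type u) [Ring R] [IsNoetherianRing R] [IsNoetherianRing Rᵐᵒᵖ]
    (hGor : IsGorenstein (ModuleCat.{u} Rᵐᵒᵖ)) :
    (∃ n : ℕ, IdimLE n (ModuleCat.of R R)) ∧
    (∃ n : ℕ, IdimLE n (ModuleCat.of Rᵐᵒᵖ Rᵐᵒᵖ)) :=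
  iwanaga_gorenstein_of_gorenstein_module_category_general R hGor
end

section
/- Let T be a triangulated category and C ⊆ T a small suspension-closed full subcategory such that Mod C is Gorenstein and locally coherent. If x → y → z → Σx is a distinguished triangle in T with all three vertices in the additive closure add C, then the image in Mod C of the induced map h_C(x) → h_C(y) is a finitely generated Gorenstein projective C-module, where h_C is the restricted Yoneda functor X ↦ T(−, X)|_C. -/
open CategoryTheory CategoryTheory.Limits CategoryTheory.Pretriangulated

universe w v u

namespace Stmt11

variable {C : Type u} [Category.{v} C] [Preadditive C]

/-- The category of right `C`-modules: contravariant additive functors `Cᵒᵖ ⥤ Ab`. -/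
abbrev Mod' (C : Type u) [Category.{v} C] [Preadditive C] :=
  ObjectProperty.FullSubcategory (fun F : Cᵒᵖ ⥤ AddCommGrpCat.{v} => F.Additive)

/-- The representable module `C(−, c)`. -/
def repr' (c : C) : Mod' C := ⟨preadditiveYoneda.obj c, inferInstance⟩

/-- The component of a morphism of modules at an object of `Cᵒᵖ`. -/
def app' {M N : Mod' C} (f : M ⟶ N) (c : Cᵒᵖ) : M.obj.obj c ⟶ N.obj.obj c :=
  NatTrans.app f.hom c

/-- A morphism of modules is a *pointwise epimorphism*. -/
def Epi' {M N : Mod' C} (f : M ⟶ N) : Prop :=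
  ∀ c : Cᵒᵖ, Function.Surjective (app' f c)

/-- A morphism of modules is a *pointwise monomorphism*. -/
def Mono' {M N : Mod' C} (f : M ⟶ N) : Prop :=
  ∀ c : Cᵒᵖ, Function.Injective (app' f c)

/-- Pointwise exactness of a composable pair of morphisms of modules. -/
def ExactAt' {K L M : Mod' C} (f : K ⟶ L) (g : L ⟶ M) : Prop :=
  ∀ c : Cᵒᵖ, Function.Exact (app' f c) (app' g c)

/-- `0 → K → L → M → 0` is a short exact sequence of modules. -/
def SES' {K L M : Mod' C} (f : K ⟶ L) (g : L ⟶ M) : Prop :=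
  Mono' f ∧ ExactAt' f g ∧ Epi' g

/-- A module `P` is *projective* (with respect to pointwise epimorphisms). -/
def Projective' (P : Mod' C) : Prop :=
  ∀ {M N : Mod' C} (e : M ⟶ N), Epi' e → ∀ f : P ⟶ N, ∃ g : P ⟶ M, g ≫ e = f

/-- A module `I` is *injective* (with respect to pointwise monomorphisms). -/
def Injective' (I : Mod' C) : Prop :=
  ∀ {M N : Mod' C} (m : M ⟶ N), Mono' m → ∀ f : M ⟶ I, ∃ g : N ⟶ I, m ≫ g = f

/-- `P` is a coproduct of the representables at the family `c` of objects of `C`. -/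
def IsCoprodOfRepr {I : Type w} (c : I → C) (P : Mod' C) : Prop :=
  ∃ ι : ∀ i, repr' (c i) ⟶ P, Nonempty (IsColimit (Cofan.mk P ι))

/-- A module is *free* on a family of objects indexed by `I` if it is a coproduct of
representables with that index set. -/
def IsFreeOn (I : Type w) (P : Mod' C) : Prop :=
  ∃ c : I → C, IsCoprodOfRepr c P

/-- Finitely generated free: finite coproduct of representables. -/
def FinFree (P : Mod' C) : Prop := ∃ n : ℕ, IsFreeOn (Fin n) P

/-- Finitely generated module. -/
def FinGen (M : Mod' C) : Prop :=
  ∃ P : Mod' C, FinFree P ∧ ∃ e : P ⟶ M, Epi' e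

/-- Finitely presented module. -/
def FinPres (M : Mod' C) : Prop :=
  ∃ (P₁ P₀ : Mod' C) (g : P₁ ⟶ P₀) (e : P₀ ⟶ M),
    FinFree P₁ ∧ FinFree P₀ ∧ ExactAt' g e ∧ Epi' e

/-- Projective dimension at most `n`. -/
def PdimLE' : ℕ → Mod' C → Prop
  | 0, M => Projective' M
  | n + 1, M => Projective' M ∨
      ∃ (K P : Mod' C) (i : K ⟶ P) (p : P ⟶ M),
        Projective' P ∧ SES' i p ∧ PdimLE' n K

/-- Injective dimension at most `n`. -/
def IdimLE' : ℕ → Mod' C → Prop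
  | 0, M => Injective' M
  | n + 1, M => Injective' M ∨
      ∃ (I K : Mod' C) (i : M ⟶ I) (p : I ⟶ K),
        Injective' I ∧ SES' i p ∧ IdimLE' n K

def FinPdim' (M : Mod' C) : Prop := ∃ n, PdimLE' n M

def FinIdim' (M : Mod' C) : Prop := ∃ n, IdimLE' n M

/-- The module category of `C` is a Gorenstein category. -/
def IsGorensteinMod (C : Type u) [Category.{v} C] [Preadditive C] : Prop :=
  (∀ M : Mod' C, FinPdim' M ↔ FinIdim' M) ∧
  (∃ n : ℕ, (∀ M : Mod' C, FinPdim' M → PdimLE' n M) ∧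
            (∀ M : Mod' C, FinIdim' M → IdimLE' n M)) ∧
  (∃ G : Mod' C, IsSeparator G ∧ FinPdim' G)

/-- Gorenstein with Gorenstein dimension at most `n`. -/
def IsGorensteinModDimLE (C : Type u) [Category.{v} C] [Preadditive C] (n : ℕ) : Prop :=
  IsGorensteinMod C ∧
  (∀ M : Mod' C, FinPdim' M → PdimLE' n M) ∧
  (∀ M : Mod' C, FinIdim' M → IdimLE' n M)

/-- A module `M` is *Gorenstein projective* if it admits a complete projective
resolution. -/
def GProj' (M : Mod' C) : Prop :=
  ∃ (P : ℤ → Mod' C) (d : ∀ i : ℤ, P (i + 1) ⟶ P i),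
    (∀ i, Projective' (P i)) ∧
    (∀ i : ℤ, ExactAt' (d (i + 1)) (d i)) ∧
    (∀ (Q : Mod' C), Projective' Q → ∀ (i : ℤ) (g : P (i + 1) ⟶ Q),
      (d (i + 1) ≫ g = 0 ↔ ∃ h : P i ⟶ Q, d i ≫ h = g)) ∧
    (∃ (e : P (0 + 1) ⟶ M) (m : M ⟶ P 0), Epi' e ∧ Mono' m ∧ e ≫ m = d 0)

/-- Local coherence of `Mod C`: the kernel of any morphism between finitely presented
modules is again finitely presented. -/
def LocallyCoherent (C : Type u) [Category.{v} C] [Preadditive C] : Prop :=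
  ∀ {M N : Mod' C} (f : M ⟶ N), FinPres M → FinPres N →
    ∀ (K : Mod' C) (k : K ⟶ M), Mono' k → ExactAt' k f → FinPres K

/-- The closure of a class of modules under extensions and retracts. -/
inductive ExtClosure (X : Mod' C → Prop) : Mod' C → Prop
  | base {M} : X M → ExtClosure X M
  | ext {K L M} (f : K ⟶ L) (g : L ⟶ M) :
      SES' f g → ExtClosure X K → ExtClosure X M → ExtClosure X L
  | retract {L L'} (i : L' ⟶ L) (r : L ⟶ L') :
      i ≫ r = 𝟙 L' → ExtClosure X L → ExtClosure X L'

variable {T : Type u} [Category.{v} T] [Preadditive T] [HasZeroObject T] [HasShift T ℤ]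
  [∀ n : ℤ, (CategoryTheory.shiftFunctor T n).Additive] [Pretriangulated T]

variable (S : Set T)

/-- The full subcategory of `T` on the set of objects `S`. -/
abbrev SubC := ObjectProperty.FullSubcategory (fun X : T => X ∈ S)

instance : (ObjectProperty.ι (fun X : T => X ∈ S)).Additive where
  map_add := rfl

/-- `S` is closed under suspension (in both directions). -/
def SuspClosed : Prop :=
  ∀ X ∈ S, X⟦(1 : ℤ)⟧ ∈ S ∧ X⟦(-1 : ℤ)⟧ ∈ S

/-- The restricted Yoneda functor `h_C` on objects: `X ↦ T(−, X)|_C`. -/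
def hC (X : T) : Mod' (SubC S) :=
  ⟨(ObjectProperty.ι (fun X : T => X ∈ S)).op ⋙ preadditiveYoneda.obj X,
    inferInstance⟩

/-- The restricted Yoneda functor `h_C` on morphisms. -/
def hCmap {X Y : T} (f : X ⟶ Y) : hC S X ⟶ hC S Y :=
  ObjectProperty.homMk (Functor.whiskerLeft (ObjectProperty.ι (fun X : T => X ∈ S)).op
    (preadditiveYoneda.map f))

/-- `X` belongs to the additive closure `add C` of `S` in `T`: it is a retract of a
finite coproduct of objects of `S`. -/
def InAdd (X : T) : Prop :=
  ∃ (n : ℕ) (c : Fin n → T) (_ : ∀ i, c i ∈ S) (Y : T) (ι : ∀ i, c i ⟶ Y),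
    Nonempty (IsColimit (Cofan.mk Y ι)) ∧
    ∃ (s : X ⟶ Y) (r : Y ⟶ X), s ≫ r = 𝟙 X

end Stmt11

open Stmt11

/-!
Rotating the triangle `x → y → z → Σx` in both directions gives an unbounded sequence
`⋯ → Σ⁻¹z → x → y → z → Σx → ⋯` in which every two consecutive maps are the first two maps of
a distinguished triangle, and whose objects stay in `add C` because `C` is suspension-closed.
Applying `h_C` turns it into an acyclic complex of finitely generated projective modules
(`h_C` of an object of `add C` is a retract of a finite coproduct of representables), and `M`,
the image of `h_C(f)`, is one of its syzygies.  Since `Mod C` is Gorenstein, every projective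
module `Q` has finite injective dimension, and dimension shifting along an injective
coresolution of `Q` reduces the `Hom(-, Q)`-acyclicity of the complex to the case of an
injective `Q`, where it follows from exactness of `Hom(-, Q)`.
-/

namespace Stmt11

section Modules

variable {C : Type u} [Category.{v} C] [Preadditive C]

lemma hom_ext' {M N : Mod' C} {f g : M ⟶ N} (h : ∀ d x, app' f d x = app' g d x) : f = g :=
  ObjectProperty.hom_ext _ (NatTrans.ext (funext fun d => AddCommGrpCat.ext (h d)))

lemma app'_comp {M N P : Mod' C} (f : M ⟶ N) (g : N ⟶ P) (d : Cᵒᵖ) (x : M.obj.obj d) :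
    app' (f ≫ g) d x = app' g d (app' f d x) := rfl

lemma app'_naturality {M N : Mod' C} (f : M ⟶ N) {d d' : Cᵒᵖ} (ρ : d ⟶ d') (x : M.obj.obj d) :
    app' f d' (M.obj.map ρ x) = N.obj.map ρ (app' f d x) :=
  ConcreteCategory.congr_hom (f.hom.naturality ρ) x

def homOfApp {M N : Mod' C} (a : ∀ d, M.obj.obj d →+ N.obj.obj d)
    (h : ∀ {d d'} (ρ : d ⟶ d') (x), a d' (M.obj.map ρ x) = N.obj.map ρ (a d x)) : M ⟶ N :=
  ObjectProperty.homMk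
    { app := fun d => AddCommGrpCat.ofHom (a d)
      naturality := fun _ _ ρ => by ext x; exact h ρ x }

lemma mono'_cancel {K L M : Mod' C} {m : L ⟶ M} (hm : Mono' m) {f g : K ⟶ L}
    (h : f ≫ m = g ≫ m) : f = g :=
  hom_ext' fun d x => hm d (congrArg (fun t => app' t d x) h)

lemma ExactAt'.comp_eq_zero {K L M : Mod' C} {f : K ⟶ L} {g : L ⟶ M} (h : ExactAt' f g) :
    f ≫ g = 0 :=
  hom_ext' fun d x => (h d).apply_apply_eq_zero x

lemma epi'_r_of_retract {X Y : Mod' C} (h : Retract X Y) : Epi' h.r :=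
  fun d x => ⟨app' h.i d x, congrArg (fun t => app' t d x) h.retract⟩

lemma FinFree.finGen {P : Mod' C} (hP : FinFree P) : FinGen P :=
  ⟨P, hP, 𝟙 P, fun _ => Function.surjective_id⟩

lemma FinGen.of_epi' {X M : Mod' C} (hX : FinGen X) (e : X ⟶ M) (he : Epi' e) : FinGen M := by
  obtain ⟨P, hP, p, hp⟩ := hX
  exact ⟨P, hP, p ≫ e, fun d => (he d).comp (hp d)⟩

lemma projective'_repr' (c : C) : Projective' (repr' c) := by
  intro M N e he f
  obtain ⟨y, hy⟩ := he (Opposite.op c) (app' f (Opposite.op c) (𝟙 c))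
  have : M.obj.Additive := M.property
  refine ⟨homOfApp (fun d => AddMonoidHom.mk'
    (fun ψ : (repr' c).obj.obj d => M.obj.map (show d.unop ⟶ c from ψ).op y) ?_) ?_, ?_⟩
  · intro ψ₁ ψ₂
    change M.obj.map (ψ₁.op + ψ₂.op) y = _
    rw [Functor.map_add]
    rfl
  · intro d d' ρ (ψ : d.unop ⟶ c)
    exact ConcreteCategory.congr_hom (M.obj.map_comp ψ.op ρ) y
  · refine hom_ext' fun d (ψ : d.unop ⟶ c) => ?_
    change app' e d (M.obj.map ψ.op y) = app' f d ψ
    rw [app'_naturality, hy]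
    exact (app'_naturality f ψ.op (𝟙 c)).symm.trans (congrArg (app' f d) (Category.comp_id ψ))

lemma Projective'.of_isColimit_cofan {I : Type w} {F : I → Mod' C} (hF : ∀ i, Projective' (F i))
    {P : Mod' C} {ι : ∀ i, F i ⟶ P} (hP : IsColimit (Cofan.mk P ι)) : Projective' P := by
  intro M N e he f
  choose g hg using fun i => hF i e he (ι i ≫ f)
  refine ⟨Cofan.IsColimit.desc hP g, Cofan.IsColimit.hom_ext hP _ _ fun i => ?_⟩
  rw [Cofan.IsColimit.fac_assoc, hg]
  rfl

lemma Projective'.of_retract {X P : Mod' C} (hP : Projective' P) (h : Retract X P) :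
    Projective' X := by
  intro M N e he f
  obtain ⟨g, hg⟩ := hP e he (h.r ≫ f)
  exact ⟨h.i ≫ g, by rw [Category.assoc, hg, h.retract_assoc]⟩

lemma FinFree.projective' {P : Mod' C} (hP : FinFree P) : Projective' P := by
  obtain ⟨n, c, ι, ⟨hι⟩⟩ := hP
  exact Projective'.of_isColimit_cofan (fun i => projective'_repr' (c i)) hι

lemma exists_epi'_mono'_fac {L M : Mod' C} (b : L ⟶ M) :
    ∃ (I : Mod' C) (p : L ⟶ I) (j : I ⟶ M), Epi' p ∧ Mono' j ∧ p ≫ j = b := by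
  have : M.obj.Additive := M.property
  let R : ∀ d, AddSubgroup (M.obj.obj d) := fun d => (app' b d).hom.range
  have hR : ∀ {d d'} (ρ : d ⟶ d') (m : M.obj.obj d), m ∈ R d → M.obj.map ρ m ∈ R d' := by
    rintro d d' ρ _ ⟨x, rfl⟩
    exact ⟨L.obj.map ρ x, app'_naturality b ρ x⟩
  let restr : ∀ {d d'} (ρ : d ⟶ d'), R d →+ R d' := fun ρ =>
    ((M.obj.map ρ).hom.comp (R _).subtype).codRestrict (R _) fun m => hR ρ m m.2
  let I : Mod' C := ⟨
    { obj := fun d => AddCommGrpCat.of (R d)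
      map := fun ρ => AddCommGrpCat.ofHom (restr ρ)
      map_id := fun d => by
        ext m; exact congrArg (fun t => t m.1) (M.obj.map_id d)
      map_comp := fun ρ σ => by
        ext m; exact ConcreteCategory.congr_hom (M.obj.map_comp ρ σ) m.1 },
    ⟨fun {d d' ρ σ} => by
      ext m; exact ConcreteCategory.congr_hom (M.obj.map_add (f := ρ) (g := σ)) m.1⟩⟩
  refine ⟨I, homOfApp (fun d => (app' b d).hom.rangeRestrict) fun ρ x => ?_,
    homOfApp (fun d => (R d).subtype) fun ρ m => rfl,
    fun d m => ?_, fun d => Subtype.coe_injective, rfl⟩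
  · exact Subtype.ext (app'_naturality b ρ x)
  · obtain ⟨x, hx⟩ := m.2
    exact ⟨x, Subtype.ext hx⟩

lemma exists_lift_of_exactAt' {K L M P : Mod' C} {i : K ⟶ L} {p : L ⟶ M} (hi : Mono' i)
    (hip : ExactAt' i p) (f : P ⟶ L) (hf : f ≫ p = 0) : ∃ h : P ⟶ K, h ≫ i = f := by
  have hrange : ∀ d x, ∃ y, app' i d y = app' f d x := fun d x =>
    (hip d _).mp (by rw [← app'_comp, hf]; rfl)
  choose φ hφ using hrange
  refine ⟨homOfApp (fun d =>
    { toFun := φ d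
      map_zero' := hi d (by rw [hφ, map_zero, map_zero])
      map_add' := fun x x' => hi d (by rw [map_add, hφ, hφ, hφ, map_add]) }) ?_, ?_⟩
  · intro d d' ρ x
    apply hi d'
    change app' i d' (φ d' (P.obj.map ρ x)) = app' i d' (K.obj.map ρ (φ d x))
    rw [hφ, app'_naturality, app'_naturality, hφ]
  · exact hom_ext' fun d x => hφ d x

lemma exists_desc_of_exactAt' {K L M Q : Mod' C} {a : K ⟶ L} {p : L ⟶ M} (hp : Epi' p)
    (hap : ExactAt' a p) (g : L ⟶ Q) (hg : a ≫ g = 0) : ∃ k : M ⟶ Q, p ≫ k = g := by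
  have hker : ∀ d x x', app' p d x = app' p d x' → app' g d x = app' g d x' := by
    intro d x x' hxx'
    obtain ⟨z, hz⟩ := (hap d (x - x')).mp (by rw [map_sub, hxx', sub_self])
    rw [← sub_eq_zero, ← map_sub, ← hz, ← app'_comp, hg]
    rfl
  choose σ hσ using hp
  refine ⟨homOfApp (fun d =>
    { toFun := fun m => app' g d (σ d m)
      map_zero' := by rw [hker d _ 0 (by rw [hσ, map_zero]), map_zero]
      map_add' := fun m m' => by
        rw [hker d _ (σ d m + σ d m') (by rw [hσ, map_add, hσ, hσ]), map_add] }) ?_, ?_⟩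
  · intro d d' ρ m
    change app' g d' (σ d' (M.obj.map ρ m)) = Q.obj.map ρ (app' g d (σ d m))
    rw [← app'_naturality, hker d' _ (L.obj.map ρ (σ d m)) (by rw [hσ, app'_naturality, hσ])]
  · exact hom_ext' fun d x => hker d _ _ (hσ d _)

lemma Injective'.exists_extension_of_exactAt' {K L M Q : Mod' C} (hQ : Injective' Q)
    {a : K ⟶ L} {b : L ⟶ M} (hab : ExactAt' a b) (g : L ⟶ Q) (hg : a ≫ g = 0) :
    ∃ h : M ⟶ Q, b ≫ h = g := by
  obtain ⟨I, p, j, hp, hj, rfl⟩ := exists_epi'_mono'_fac b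
  have hap : ExactAt' a p := fun d x =>
    ((injective_iff_map_eq_zero' _).mp (hj d) _).symm.trans (hab d x)
  obtain ⟨k, rfl⟩ := exists_desc_of_exactAt' hp hap g hg
  obtain ⟨h, hh⟩ := hQ j hj k
  exact ⟨h, by rw [Category.assoc, hh]⟩

theorem exists_comp_eq_of_idimLE {P : ℤ → Mod' C} {d : ∀ i : ℤ, P (i + 1) ⟶ P i}
    (hP : ∀ i, Projective' (P i)) (hd : ∀ i, ExactAt' (d (i + 1)) (d i)) (n : ℕ) :
    ∀ Q : Mod' C, IdimLE' n Q → ∀ (i : ℤ) (g : P (i + 1) ⟶ Q), d (i + 1) ≫ g = 0 →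
      ∃ h : P i ⟶ Q, d i ≫ h = g := by
  induction n with
  | zero => exact fun Q hQ i => hQ.exists_extension_of_exactAt' (hd i)
  | succ n ih =>
    rintro Q (hQ | ⟨I, Q', m, p, hI, ⟨hm, hmp, hp⟩, hQ'⟩) i g hg
    · exact hQ.exists_extension_of_exactAt' (hd i) g hg
    obtain ⟨i, rfl⟩ : ∃ i', i = i' + 1 := ⟨i - 1, by omega⟩
    obtain ⟨h₁, hh₁⟩ := hI.exists_extension_of_exactAt' (hd (i + 1)) (g ≫ m)
      (by rw [← Category.assoc, hg, zero_comp])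
    obtain ⟨h₂, hh₂⟩ := ih Q' hQ' i (h₁ ≫ p)
      (by rw [← Category.assoc, hh₁, Category.assoc, hmp.comp_eq_zero, comp_zero])
    obtain ⟨h₃, hh₃⟩ := hP i p hp h₂
    -- `h₁` corrected by `d i ≫ h₃` lands in `Q ⊆ I` and still extends `g ≫ m`
    obtain ⟨h, hh⟩ := exists_lift_of_exactAt' hm hmp (h₁ - d i ≫ h₃)
      (by rw [Preadditive.sub_comp, Category.assoc, hh₃, hh₂, sub_self])
    refine ⟨h, mono'_cancel hm ?_⟩
    rw [Category.assoc, hh, Preadditive.comp_sub, hh₁, ← Category.assoc, (hd i).comp_eq_zero,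
      zero_comp, sub_zero]

theorem gProj'_of_projective_exact (hGor : IsGorensteinMod C) {P : ℤ → Mod' C}
    (d : ∀ i : ℤ, P (i + 1) ⟶ P i) (hP : ∀ i, Projective' (P i))
    (hd : ∀ i, ExactAt' (d (i + 1)) (d i)) {M : Mod' C} (e : P (0 + 1) ⟶ M) (m : M ⟶ P 0)
    (he : Epi' e) (hm : Mono' m) (hem : e ≫ m = d 0) : GProj' M := by
  refine ⟨P, d, hP, hd, fun Q hQ i g => ⟨fun hg => ?_, ?_⟩, e, m, he, hm, hem⟩
  · obtain ⟨n, hn⟩ := (hGor.1 Q).mp ⟨0, hQ⟩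
    exact exists_comp_eq_of_idimLE hP hd n Q hn i g hg
  · rintro ⟨h, rfl⟩
    rw [← Category.assoc, (hd i).comp_eq_zero, zero_comp]

end Modules

section RestrictedYoneda

variable {T : Type u} [Category.{v} T] [Preadditive T] {S : Set T}

variable (S) in
def hCFunctor : T ⥤ Mod' (SubC S) where
  obj := hC S
  map := hCmap S
  map_id _ := hom_ext' fun _ _ => Category.comp_id _
  map_comp _ _ := hom_ext' fun _ _ => (Category.assoc _ _ _).symm

instance : (hCFunctor S).Additive where
  map_add := hom_ext' fun _ _ => Preadditive.comp_add _ _ _ _ _ _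

def reprIsoHC (c : SubC S) : repr' c ≅ (hCFunctor S).obj c.obj where
  hom := homOfApp (fun d => AddMonoidHom.mk' (fun ψ : d.unop ⟶ c => ψ.hom) fun _ _ => rfl)
    fun _ _ => rfl
  inv := homOfApp (fun d => AddMonoidHom.mk'
    (fun φ : d.unop.obj ⟶ c.obj => ObjectProperty.homMk φ) fun _ _ => rfl) fun _ _ => rfl
  hom_inv_id := hom_ext' fun _ _ => rfl
  inv_hom_id := hom_ext' fun _ _ => rfl

def reprBicone {J : Type*} {c : J → T} (hc : ∀ j, c j ∈ S) (b : Bicone c) :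
    Bicone fun j => repr' (⟨c j, hc j⟩ : SubC S) where
  pt := (hCFunctor S).obj b.pt
  π j := (hCFunctor S).map (b.π j) ≫ (reprIsoHC ⟨c j, hc j⟩).inv
  ι j := (reprIsoHC ⟨c j, hc j⟩).hom ≫ (hCFunctor S).map (b.ι j)
  ι_π j j' := by
    rw [Category.assoc, ← Functor.map_comp_assoc, b.ι_π]
    split_ifs with h
    · subst h
      simp
    · simp

lemma reprBicone_total {J : Type*} [Fintype J] {c : J → T} (hc : ∀ j, c j ∈ S) {b : Bicone c}
    (hb : ∑ j, b.π j ≫ b.ι j = 𝟙 b.pt) :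
    ∑ j, (reprBicone hc b).π j ≫ (reprBicone hc b).ι j = 𝟙 _ := by
  change ∑ j, ((hCFunctor S).map (b.π j) ≫ _) ≫ _ ≫ (hCFunctor S).map (b.ι j) =
    𝟙 ((hCFunctor S).obj b.pt)
  simp only [Category.assoc, Iso.inv_hom_id_assoc, ← Functor.map_comp]
  rw [← Functor.map_sum, hb, CategoryTheory.Functor.map_id]

lemma finFree_of_bicone {n : ℕ} {c : Fin n → T} (hc : ∀ j, c j ∈ S) {b : Bicone c}
    (hb : ∑ j, b.π j ≫ b.ι j = 𝟙 b.pt) : FinFree ((hCFunctor S).obj b.pt) :=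
  ⟨n, fun j => ⟨c j, hc j⟩, (reprBicone hc b).ι,
    ⟨(isBilimitOfTotal _ (reprBicone_total hc hb)).isColimit⟩⟩

lemma InAdd.exists_bicone {X : T} (h : InAdd S X) :
    ∃ (n : ℕ) (c : Fin n → T) (_ : ∀ i, c i ∈ S) (b : Bicone c),
      ∑ j, b.π j ≫ b.ι j = 𝟙 b.pt ∧ Nonempty (Retract X b.pt) := by
  obtain ⟨n, c, hc, Y, ι, ⟨hY⟩, s, r, hsr⟩ := h
  exact ⟨n, c, hc, Bicone.ofColimitCocone hY,
    IsBilimit.total (biconeIsBilimitOfColimitCoconeOfIsColimit hY), ⟨s, r, hsr⟩⟩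

lemma InAdd.exists_retract_finFree {X : T} (h : InAdd S X) :
    ∃ P : Mod' (SubC S), FinFree P ∧ Nonempty (Retract (hC S X) P) := by
  obtain ⟨n, c, hc, b, hb, ⟨hX⟩⟩ := h.exists_bicone
  exact ⟨_, finFree_of_bicone hc hb, ⟨hX.map (hCFunctor S)⟩⟩

lemma InAdd.projective'_hC {X : T} (h : InAdd S X) : Projective' (hC S X) := by
  obtain ⟨P, hP, ⟨hX⟩⟩ := h.exists_retract_finFree
  exact Projective'.of_retract hP.projective' hX

lemma InAdd.finGen_hC {X : T} (h : InAdd S X) : FinGen (hC S X) := by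
  obtain ⟨P, hP, ⟨hX⟩⟩ := h.exists_retract_finFree
  exact hP.finGen.of_epi' hX.r (epi'_r_of_retract hX)

end RestrictedYoneda

section Rotations

variable {T : Type u} [Category.{v} T] [HasShift T ℤ]

lemma InAdd.shift {S : Set T} {X : T} (h : InAdd S X) (n : ℤ) (hS : ∀ c ∈ S, c⟦n⟧ ∈ S) :
    InAdd S (X⟦n⟧) := by
  obtain ⟨m, c, hc, Y, ι, ⟨hY⟩, s, r, hsr⟩ := h
  exact ⟨m, fun i => (c i)⟦n⟧, fun i => hS _ (hc i), Y⟦n⟧, fun i => (ι i)⟦n⟧',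
    ⟨isColimitCofanMkObjOfIsColimit (shiftFunctor T n) c ι hY⟩, s⟦n⟧', r⟦n⟧',
    by rw [← Functor.map_comp, hsr, CategoryTheory.Functor.map_id]⟩

variable [Preadditive T] (t : Triangle T)

def invRotateIter : ℕ → Triangle T
  | 0 => t
  | n + 1 => (invRotateIter n).invRotate

def rotateIter : ℕ → Triangle T
  | 0 => t
  | n + 1 => (rotateIter n).rotate

/-- Degree `i` of the sequence `⋯ → Σ⁻¹obj₃ → obj₁ → obj₂ → obj₃ → Σobj₁ → ⋯` of all rotations
of `t`, with `obj₂` in degree `0` and the maps lowering the degree. -/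
def rotationObj : ℤ → T
  | .ofNat n => (invRotateIter t n).obj₂
  | .negSucc n => (rotateIter t (n + 1)).obj₂

def rotationMor : ∀ i : ℤ, rotationObj t (i + 1) ⟶ rotationObj t i
  | .ofNat n => (invRotateIter t n).mor₁
  | .negSucc 0 => t.mor₂
  | .negSucc (n + 1) => (rotateIter t (n + 1)).mor₂

variable {t} {P : T → Prop} (hP : ∀ X, P X → P (X⟦(1 : ℤ)⟧) ∧ P (X⟦(-1 : ℤ)⟧))
  (ht : P t.obj₁ ∧ P t.obj₂ ∧ P t.obj₃)
include hP ht

lemma invRotateIter_objs : ∀ n, P (invRotateIter t n).obj₁ ∧ P (invRotateIter t n).obj₂ ∧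
    P (invRotateIter t n).obj₃
  | 0 => ht
  | n + 1 =>
    have ⟨h₁, h₂, h₃⟩ := invRotateIter_objs n
    ⟨(hP _ h₃).2, h₁, h₂⟩

lemma rotateIter_objs : ∀ n, P (rotateIter t n).obj₁ ∧ P (rotateIter t n).obj₂ ∧
    P (rotateIter t n).obj₃
  | 0 => ht
  | n + 1 =>
    have ⟨h₁, h₂, h₃⟩ := rotateIter_objs n
    ⟨h₂, h₃, (hP _ h₁).1⟩

lemma rotationObj_mem : ∀ i, P (rotationObj t i)
  | .ofNat n => (invRotateIter_objs hP ht n).2.1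
  | .negSucc n => (rotateIter_objs hP ht (n + 1)).2.1

end Rotations

section Triangulated

variable {T : Type u} [Category.{v} T] [Preadditive T] [HasZeroObject T] [HasShift T ℤ]
  [∀ n : ℤ, (shiftFunctor T n).Additive] [Pretriangulated T]

lemma exactAt'_hCmap_of_distTriang {S : Set T} {a b c : T} {p : a ⟶ b} {q : b ⟶ c}
    {w : c ⟶ a⟦(1 : ℤ)⟧} (hT : Triangle.mk p q w ∈ distTriang T) :
    ExactAt' (hCmap S p) (hCmap S q) := fun d φ =>
  ⟨fun hφ => (Triangle.coyoneda_exact₂ _ hT φ hφ).imp fun _ h => h.symm, by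
    rintro ⟨ψ, rfl⟩
    exact (Category.assoc _ _ _).trans
      ((congrArg _ (comp_distTriang_mor_zero₁₂ _ hT)).trans comp_zero)⟩

variable {t : Triangle T} (ht : t ∈ distTriang T)
include ht

lemma invRotateIter_mem : ∀ n, invRotateIter t n ∈ distTriang T
  | 0 => ht
  | n + 1 => inv_rot_of_distTriang _ (invRotateIter_mem n)

lemma rotateIter_mem : ∀ n, rotateIter t n ∈ distTriang T
  | 0 => ht
  | n + 1 => rot_of_distTriang _ (rotateIter_mem n)

lemma exists_distTriang_rotationMor : ∀ i : ℤ,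
    ∃ w, Triangle.mk (rotationMor t (i + 1)) (rotationMor t i) w ∈ distTriang T
  | .ofNat n => ⟨_, invRotateIter_mem ht (n + 1)⟩
  | .negSucc 0 => ⟨_, ht⟩
  | .negSucc 1 => ⟨_, rotateIter_mem ht 1⟩
  | .negSucc (n + 2) => ⟨_, rotateIter_mem ht (n + 2)⟩

end Triangulated

end Stmt11

/-- Let `T` be a triangulated category and `C ⊆ T` (given by a set `S`
of objects) a small suspension-closed full subcategory such that `Mod C` is Gorenstein
and locally coherent.  If `x → y → z → Σx` is a distinguished triangle with all vertices
in the additive closure `add C`, then the image in `Mod C` of `h_C(x) → h_C(y)` is a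
finitely generated Gorenstein projective `C`-module. -/
theorem image_of_triangle_in_addC_is_gproj
    {T : Type u} [Category.{v} T] [Preadditive T] [HasZeroObject T] [HasShift T ℤ]
    [∀ n : ℤ, (CategoryTheory.shiftFunctor T n).Additive] [Pretriangulated T]
    (S : Set T) (hsusp : SuspClosed S)
    (hGor : IsGorensteinMod (SubC S)) (hcoh : LocallyCoherent (SubC S))
    {x y z : T} (f : x ⟶ y) (u : y ⟶ z) (v : z ⟶ x⟦(1 : ℤ)⟧)
    (hdist : Triangle.mk f u v ∈ distTriang T)
    (hx : InAdd S x) (hy : InAdd S y) (hz : InAdd S z)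
    (M : Mod' (SubC S)) (e : hC S x ⟶ M) (m : M ⟶ hC S y)
    (he : Epi' e) (hm : Mono' m) (hfact : e ≫ m = hCmap S f) :
    FinGen M ∧ GProj' M := by
  have hshift : ∀ X, InAdd S X → InAdd S (X⟦(1 : ℤ)⟧) ∧ InAdd S (X⟦(-1 : ℤ)⟧) := fun X hX =>
    ⟨hX.shift 1 fun c hc => (hsusp c hc).1, hX.shift (-1) fun c hc => (hsusp c hc).2⟩
  have hexact : ∀ i, ExactAt' (hCmap S (rotationMor (Triangle.mk f u v) (i + 1)))
      (hCmap S (rotationMor (Triangle.mk f u v) i)) := fun i =>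
    have ⟨_, hw⟩ := exists_distTriang_rotationMor hdist i
    exactAt'_hCmap_of_distTriang hw
  exact ⟨hx.finGen_hC.of_epi' e he,
    gProj'_of_projective_exact hGor _
      (fun i => (rotationObj_mem hshift ⟨hx, hy, hz⟩ i).projective'_hC) hexact e m he hm hfact⟩
end

section
/- Let R be a commutative noetherian ring, w ∈ R a non-zero-divisor, and (A, B) a matrix factorization of w: n×n matrices with AB = w·I_n = BA. Set U = R/(w). Then the 2-periodic complex ⋯ → U^n →^{B} U^n →^{A} U^n →^{B} U^n → ⋯ of free U-modules is acyclic and remains acyclic after applying Hom_U(−, U); consequently the U-module M = Im(A : U^n → U^n) is finitely generated Gorenstein projective. -/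
open CategoryTheory CategoryTheory.Limits

namespace Stmt18

/-- A module `M` over a ring `U` is *Gorenstein projective* if it admits a complete
projective resolution: a doubly infinite acyclic complex of projective modules, which
remains acyclic after applying `Hom(−, Q)` for every projective `Q`, having `M` as a
syzygy. -/
def IsGorensteinProjective (U : Type) [Ring U] (M : ModuleCat.{0} U) : Prop :=
  ∃ (P : ℤ → ModuleCat.{0} U) (d : ∀ i : ℤ, P (i + 1) ⟶ P i),
    (∀ i, Projective (P i)) ∧
    (∀ i : ℤ, Function.Exact (d (i + 1)) (d i)) ∧
    (∀ (Q : ModuleCat.{0} U), Projective Q → ∀ (i : ℤ) (g : P (i + 1) ⟶ Q),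
      (d (i + 1) ≫ g = 0 ↔ ∃ h : P i ⟶ Q, d i ≫ h = g)) ∧
    (∃ (e : P (0 + 1) ⟶ M) (m : M ⟶ P 0),
      Function.Surjective e ∧ Function.Injective m ∧ e ≫ m = d 0)

end Stmt18

open Stmt18

/-!
Reduced modulo `w`, the matrices satisfy `A'B' = B'A' = 0`. If `A'x = 0`, lift `x` to `x₀ ∈ Rⁿ`;
then `A x₀ = w z` and `w x₀ = B A x₀ = w B z`, so `x₀ = B z` because `w` is a non-zero-divisor.
This is acyclicity. The transposes `(Bᵀ, Aᵀ)` are again a matrix factorization of `w`, and under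
`Hom_U(Uⁿ, U) ≅ Uⁿ` precomposition with `A'` becomes `A'ᵀ`, which gives the dual statement. For
projective `Q` we have `Hom_U(Uⁿ, Q) ≅ Hom_U(Uⁿ, U) ⊗ Q` with `Q` flat, so the complex stays
acyclic under `Hom_U(−, Q)` and is a complete projective resolution of `Im A'`.
-/

section FlatCoefficients

variable {S : Type*} [CommRing S] {M₁ M₂ M₃ Q : Type*}
  [AddCommGroup M₁] [Module S M₁] [Module.Finite S M₁] [Module.Projective S M₁]
  [AddCommGroup M₂] [Module S M₂] [Module.Finite S M₂] [Module.Projective S M₂]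
  [AddCommGroup M₃] [Module S M₃] [Module.Finite S M₃] [Module.Projective S M₃]
  [AddCommGroup Q] [Module S Q] [Module.Flat S Q]

theorem Function.Exact.lcomp_of_dualMap {f : M₁ →ₗ[S] M₂} {g : M₂ →ₗ[S] M₃}
    (h : Function.Exact g.dualMap f.dualMap) :
    Function.Exact (LinearMap.lcomp S Q g) (LinearMap.lcomp S Q f) :=
  Function.Exact.of_ladder_linearEquiv_of_exact (e₁ := dualTensorHomEquiv S M₃ Q)
    (e₂ := dualTensorHomEquiv S M₂ Q) (e₃ := dualTensorHomEquiv S M₁ Q)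
    (dualTensorHom_comp_rTensor_dualMap g).symm (dualTensorHom_comp_rTensor_dualMap f).symm
    (Module.Flat.rTensor_exact Q h)

end FlatCoefficients

namespace Matrix

section Dual

variable {S : Type*} [CommRing S] {l m k : Type*} [Fintype l] [DecidableEq l]
  [Fintype m] [DecidableEq m] [Fintype k] [DecidableEq k]

theorem dualMap_mulVecLin_comp_dotProductEquiv (P : Matrix l m S) :
    P.mulVecLin.dualMap ∘ₗ (dotProductEquiv S l).toLinearMap =
      (dotProductEquiv S m).toLinearMap ∘ₗ Pᵀ.mulVecLin := by
  ext v x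
  simp

theorem exact_dualMap_mulVecLin_iff (P : Matrix l m S) (Q : Matrix m k S) :
    Function.Exact P.mulVecLin.dualMap Q.mulVecLin.dualMap ↔
      Function.Exact Pᵀ.mulVecLin Qᵀ.mulVecLin :=
  Function.Exact.iff_of_ladder_linearEquiv (dualMap_mulVecLin_comp_dotProductEquiv P)
    (dualMap_mulVecLin_comp_dotProductEquiv Q)

end Dual

section Factorization

variable {R : Type*} [CommRing R] {w : R} {ι : Type*} [Fintype ι] [DecidableEq ι]
  {A B : Matrix ι ι R}

theorem map_mk_mul_map_mk_eq_zero (hAB : A * B = w • 1) :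
    A.map (Ideal.Quotient.mk (Ideal.span {w})) * B.map (Ideal.Quotient.mk (Ideal.span {w})) =
      0 := by
  rw [← Matrix.map_mul, hAB]
  ext i j
  simp

theorem exists_map_mk_mulVec_eq (hw : w ∈ nonZeroDivisors R) (hBA : B * A = w • 1)
    {x : ι → R ⧸ Ideal.span {w}} (hx : A.map (Ideal.Quotient.mk (Ideal.span {w})) *ᵥ x = 0) :
    ∃ y, B.map (Ideal.Quotient.mk (Ideal.span {w})) *ᵥ y = x := by
  obtain ⟨x₀, rfl⟩ := Ideal.Quotient.mk_surjective.comp_left x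
  have hdvd : ∀ i, w ∣ (A *ᵥ x₀) i := fun i => by
    rw [← Ideal.mem_span_singleton, ← Ideal.Quotient.eq_zero_iff_mem, RingHom.map_mulVec, hx]
    rfl
  choose z hz using hdvd
  have hx₀ : x₀ = B *ᵥ z := by
    funext i
    refine (mul_cancel_left_mem_nonZeroDivisors hw).mp ?_
    calc w * x₀ i = (B *ᵥ (A *ᵥ x₀)) i := by
          rw [mulVec_mulVec, hBA, smul_mulVec, one_mulVec]; rfl
      _ = w * (B *ᵥ z) i := by
        rw [show A *ᵥ x₀ = w • z from funext hz, mulVec_smul]; rfl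
  exact ⟨Ideal.Quotient.mk _ ∘ z, by ext i; rw [← RingHom.map_mulVec, hx₀]; rfl⟩

theorem exact_mulVecLin_map_mk (hw : w ∈ nonZeroDivisors R) (hAB : A * B = w • 1)
    (hBA : B * A = w • 1) :
    Function.Exact (B.map (Ideal.Quotient.mk (Ideal.span {w}))).mulVecLin
      (A.map (Ideal.Quotient.mk (Ideal.span {w}))).mulVecLin := by
  refine fun x => ⟨fun hx => exists_map_mk_mulVec_eq hw hBA hx, ?_⟩
  rintro ⟨y, rfl⟩
  simp [mulVec_mulVec, map_mk_mul_map_mk_eq_zero hAB]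

theorem exact_lcomp_mulVecLin_map_mk (hw : w ∈ nonZeroDivisors R) (hAB : A * B = w • 1)
    (hBA : B * A = w • 1) (Q : Type*) [AddCommGroup Q] [Module (R ⧸ Ideal.span {w}) Q]
    [Module.Flat (R ⧸ Ideal.span {w}) Q] :
    Function.Exact
      (LinearMap.lcomp (R ⧸ Ideal.span {w}) Q
        (A.map (Ideal.Quotient.mk (Ideal.span {w}))).mulVecLin)
      (LinearMap.lcomp (R ⧸ Ideal.span {w}) Q
        (B.map (Ideal.Quotient.mk (Ideal.span {w}))).mulVecLin) := by
  refine Function.Exact.lcomp_of_dualMap ?_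
  rw [exact_dualMap_mulVecLin_iff, ← transpose_map, ← transpose_map]
  exact exact_mulVecLin_map_mk hw (by rw [← transpose_mul, hAB]; simp)
    (by rw [← transpose_mul, hBA]; simp)

end Factorization

end Matrix

section TwoPeriodic

variable {U : Type} [Ring U] {P : Type} [AddCommGroup P] [Module U P]

theorem ModuleCat.exact_ofHom_comp_iff {Q : ModuleCat.{0} U} (f g : P →ₗ[U] P) :
    Function.Exact (fun h : ModuleCat.of U P ⟶ Q => ModuleCat.ofHom f ≫ h)
        (fun h => ModuleCat.ofHom g ≫ h) ↔
      Function.Exact (fun φ : P →ₗ[U] Q => φ ∘ₗ f) (fun φ => φ ∘ₗ g) :=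
  ModuleCat.homEquiv.forall_congr fun {_} => iff_congr ModuleCat.hom_ext_iff
    ⟨fun ⟨k, hk⟩ => ⟨k.hom, congrArg ModuleCat.Hom.hom hk⟩,
      fun ⟨φ, hφ⟩ => ⟨ModuleCat.ofHom φ, ModuleCat.hom_ext hφ⟩⟩

theorem isGorensteinProjective_range_of_periodic [Module.Projective U P] {f g : P →ₗ[U] P}
    (hgf : Function.Exact g f) (hfg : Function.Exact f g)
    (hfg' : ∀ (Q : Type) [AddCommGroup Q] [Module U Q] [Module.Projective U Q],
      Function.Exact (fun φ : P →ₗ[U] Q => φ ∘ₗ f) (fun φ => φ ∘ₗ g))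
    (hgf' : ∀ (Q : Type) [AddCommGroup Q] [Module U Q] [Module.Projective U Q],
      Function.Exact (fun φ : P →ₗ[U] Q => φ ∘ₗ g) (fun φ => φ ∘ₗ f)) :
    IsGorensteinProjective U (ModuleCat.of U (LinearMap.range f)) := by
  have parity (i : ℤ) : (if Even (i + 1) then f else g) = if Even i then g else f := by
    by_cases hi : Even i <;> simp [hi]
  refine ⟨fun _ => ModuleCat.of U P, fun i => ModuleCat.ofHom (if Even i then f else g),
    fun _ => (IsProjective.iff_projective P).mp inferInstance, fun i => ?_, fun Q hQ i => ?_,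
    ModuleCat.ofHom f.rangeRestrict, ModuleCat.ofHom (LinearMap.range f).subtype,
    f.surjective_rangeRestrict, Submodule.injective_subtype _, ?_⟩
  · simp only [ModuleCat.hom_ofHom]
    rw [parity]
    split_ifs
    exacts [hgf, hfg]
  · have : Module.Projective U Q := (IsProjective.iff_projective Q).mpr hQ
    show Function.Exact (fun h => ModuleCat.ofHom (if Even i then f else g) ≫ h)
      (fun h => ModuleCat.ofHom (if Even (i + 1) then f else g) ≫ h)
    rw [parity, ModuleCat.exact_ofHom_comp_iff]
    split_ifs
    exacts [hfg' Q, hgf' Q]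
  · show _ = ModuleCat.ofHom (if Even (0 : ℤ) then f else g)
    rw [if_pos Even.zero]
    rfl

end TwoPeriodic

theorem matrix_factorization_gorenstein_projective_general
    (R : Type) [CommRing R] (w : R) (hw : w ∈ nonZeroDivisors R)
    (n : ℕ) (A B : Matrix (Fin n) (Fin n) R)
    (hAB : A * B = w • (1 : Matrix (Fin n) (Fin n) R))
    (hBA : B * A = w • (1 : Matrix (Fin n) (Fin n) R)) :
    letI U := R ⧸ Ideal.span {w}
    letI A' : Matrix (Fin n) (Fin n) U := A.map (Ideal.Quotient.mk (Ideal.span {w}))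
    letI B' : Matrix (Fin n) (Fin n) U := B.map (Ideal.Quotient.mk (Ideal.span {w}))
    -- the 2-periodic complex is acyclic:
    (Function.Exact B'.mulVecLin A'.mulVecLin ∧ Function.Exact A'.mulVecLin B'.mulVecLin) ∧
    -- it remains acyclic after applying `Hom_U(−, U)`:
    (Function.Exact
        (fun φ : (Fin n → U) →ₗ[U] U => φ.comp A'.mulVecLin)
        (fun φ : (Fin n → U) →ₗ[U] U => φ.comp B'.mulVecLin) ∧
      Function.Exact
        (fun φ : (Fin n → U) →ₗ[U] U => φ.comp B'.mulVecLin)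
        (fun φ : (Fin n → U) →ₗ[U] U => φ.comp A'.mulVecLin)) ∧
    -- the image of `A'` is a finitely generated Gorenstein projective module:
    Module.Finite U (LinearMap.range A'.mulVecLin) ∧
    IsGorensteinProjective U (ModuleCat.of U (LinearMap.range A'.mulVecLin)) := by
  have homExactAB (Q : Type) [AddCommGroup Q] [Module (R ⧸ Ideal.span {w}) Q]
      [Module.Projective (R ⧸ Ideal.span {w}) Q] :=
    Matrix.exact_lcomp_mulVecLin_map_mk hw hAB hBA Q
  have homExactBA (Q : Type) [AddCommGroup Q] [Module (R ⧸ Ideal.span {w}) Q]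
      [Module.Projective (R ⧸ Ideal.span {w}) Q] :=
    Matrix.exact_lcomp_mulVecLin_map_mk hw hBA hAB Q
  have exactBA := Matrix.exact_mulVecLin_map_mk hw hAB hBA
  have exactAB := Matrix.exact_mulVecLin_map_mk hw hBA hAB
  exact ⟨⟨exactBA, exactAB⟩, ⟨homExactAB _, homExactBA _⟩, inferInstance,
    isGorensteinProjective_range_of_periodic exactBA exactAB homExactAB homExactBA⟩

/-- Let `R` be a commutative noetherian ring, `w` a non-zero-divisor and
`(A, B)` a matrix factorization of `w` (`A * B = w • 1 = B * A`).  Over `U = R/(w)` the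
2-periodic complex `⋯ → Uⁿ → Uⁿ → Uⁿ → ⋯` with differentials alternately given by the
reductions `A'`, `B'` of `A`, `B` is acyclic and remains acyclic after applying
`Hom_U(−, U)`; consequently `M = Im(A' : Uⁿ → Uⁿ)` is a finitely generated Gorenstein
projective `U`-module. -/
theorem matrix_factorization_gorenstein_projective
    (R : Type) [CommRing R] [IsNoetherianRing R] (w : R) (hw : w ∈ nonZeroDivisors R)
    (n : ℕ) (A B : Matrix (Fin n) (Fin n) R)
    (hAB : A * B = w • (1 : Matrix (Fin n) (Fin n) R))
    (hBA : B * A = w • (1 : Matrix (Fin n) (Fin n) R)) :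
    letI U := R ⧸ Ideal.span {w}
    letI A' : Matrix (Fin n) (Fin n) U := A.map (Ideal.Quotient.mk (Ideal.span {w}))
    letI B' : Matrix (Fin n) (Fin n) U := B.map (Ideal.Quotient.mk (Ideal.span {w}))
    -- the 2-periodic complex is acyclic:
    (Function.Exact B'.mulVecLin A'.mulVecLin ∧ Function.Exact A'.mulVecLin B'.mulVecLin) ∧
    -- it remains acyclic after applying `Hom_U(−, U)`:
    (Function.Exact
        (fun φ : (Fin n → U) →ₗ[U] U => φ.comp A'.mulVecLin)
        (fun φ : (Fin n → U) →ₗ[U] U => φ.comp B'.mulVecLin) ∧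
      Function.Exact
        (fun φ : (Fin n → U) →ₗ[U] U => φ.comp B'.mulVecLin)
        (fun φ : (Fin n → U) →ₗ[U] U => φ.comp A'.mulVecLin)) ∧
    -- the image of `A'` is a finitely generated Gorenstein projective module:
    Module.Finite U (LinearMap.range A'.mulVecLin) ∧
    IsGorensteinProjective U (ModuleCat.of U (LinearMap.range A'.mulVecLin)) :=
  matrix_factorization_gorenstein_projective_general R w hw n A B hAB hBA
end
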